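/- Let A = A₀ ⊕ A₁ be a 3-dimensional Novikov superalgebra over ℂ with dim A₁ = 2 and A₁∘A₁ ≠ 0. Then A₀∘A₀ = 0, A₀∘A₁ = 0, and A₁∘A₀ = 0. -/
import Mathlib


/-- A Novikov superalgebra over ℂ: a ℤ₂-graded vector space `V = A 0 ⊕ A 1`
with a bilinear product respecting the grading, satisfying the graded
left-symmetry and graded right-commutativity identities. -/
structure NovikovSuperAlgebra (V : Type*) [AddCommGroup V] [Module ℂ V] where
  mul : V →ₗ[ℂ] V →ₗ[ℂ] V
  grading : ZMod 2 → Submodule ℂ V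
  spanning : ∀ x : V, ∃ x0 ∈ grading 0, ∃ x1 ∈ grading 1, x = x0 + x1
  indep : ∀ x : V, x ∈ grading 0 → x ∈ grading 1 → x = 0
  mul_mem : ∀ i j : ZMod 2, ∀ u ∈ grading i, ∀ v ∈ grading j, mul u v ∈ grading (i + j)
  super_left_sym : ∀ i j : ZMod 2, ∀ u ∈ grading i, ∀ v ∈ grading j, ∀ w : V,
    mul (mul u v) w - mul u (mul v w)
      = ((-1 : ℂ) ^ (i.val * j.val)) • (mul (mul v u) w - mul v (mul u w))
  super_right_comm : ∀ i j : ZMod 2, ∀ u ∈ grading i, ∀ v ∈ grading j, ∀ w : V,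
    mul (mul w u) v = ((-1 : ℂ) ^ (i.val * j.val)) • mul (mul w v) u

/-- The (ungraded) Novikov algebra identities for a bilinear product. -/
def IsNovikovMul {V : Type*} [AddCommGroup V] [Module ℂ V]
    (mul : V →ₗ[ℂ] V →ₗ[ℂ] V) : Prop :=
  (∀ x y z : V, mul (mul x y) z - mul x (mul y z) = mul (mul y x) z - mul y (mul x z)) ∧
  (∀ x y z : V, mul (mul z x) y = mul (mul z y) x)

/-- Supercommutator of elements of parities `i`, `j`. -/
def sbr {V : Type*} [AddCommGroup V] [Module ℂ V]
    (mul : V →ₗ[ℂ] V →ₗ[ℂ] V) (i j : ZMod 2) (u v : V) : V :=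
  mul u v - ((-1 : ℂ) ^ (i.val * j.val)) • mul v u

/-- a 3-dimensional Novikov superalgebra with `dim A₁ = 2` and
`A₁∘A₁ ≠ 0` satisfies `A₀∘A₀ = A₀∘A₁ = A₁∘A₀ = 0`. -/
theorem dim3_odd2_products_vanish {V : Type*} [AddCommGroup V] [Module ℂ V]
    [FiniteDimensional ℂ V] (hdim : Module.finrank ℂ V = 3)
    (N : NovikovSuperAlgebra V)
    (hodd : Module.finrank ℂ (N.grading 1) = 2)
    (hne : ∃ u ∈ N.grading 1, ∃ v ∈ N.grading 1, N.mul u v ≠ 0) :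
    (∀ x ∈ N.grading 0, ∀ y ∈ N.grading 0, N.mul x y = 0) ∧
    (∀ x ∈ N.grading 0, ∀ y ∈ N.grading 1, N.mul x y = 0) ∧
    (∀ x ∈ N.grading 1, ∀ y ∈ N.grading 0, N.mul x y = 0) := by
  classical
  obtain ⟨u₀, hu₀, v₀, hv₀, hcne⟩ := hne
  set c : V := N.mul u₀ v₀ with hcdef
  have h11 : (1 + 1 : ZMod 2) = 0 := by decide
  have hval1 : (1 : ZMod 2).val = 1 := rfl
  have hval0 : (0 : ZMod 2).val = 0 := rfl
  have hsgn : ((-1 : ℂ) ^ ((1 : ZMod 2).val * (1 : ZMod 2).val)) = -1 := by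
    rw [hval1]; norm_num
  have mulmem11 : ∀ u ∈ N.grading 1, ∀ v ∈ N.grading 1, N.mul u v ∈ N.grading 0 := by
    intro u hu v hv
    have h := N.mul_mem 1 1 u hu v hv
    rwa [h11] at h
  have hcmem : c ∈ N.grading 0 := mulmem11 u₀ hu₀ v₀ hv₀
  -- grading 0 is 1-dimensional, spanned by c
  have hsup : N.grading 0 ⊔ N.grading 1 = ⊤ := by
    rw [eq_top_iff]
    intro x _
    obtain ⟨x0, h0, x1, h1, rfl⟩ := N.spanning x
    exact Submodule.add_mem_sup h0 h1
  have hinf : N.grading 0 ⊓ N.grading 1 = ⊥ := by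
    rw [eq_bot_iff]
    intro x hx
    simpa using N.indep x hx.1 hx.2
  have hfin : Module.finrank ℂ (N.grading 0) = 1 := by
    have h := Submodule.finrank_sup_add_finrank_inf_eq (N.grading 0) (N.grading 1)
    rw [hsup, hinf, finrank_top, hdim, hodd] at h
    simp only [finrank_bot] at h
    omega
  have hspan : Submodule.span ℂ ({c} : Set V) = N.grading 0 := by
    apply Submodule.eq_of_le_of_finrank_le
    · rwa [Submodule.span_singleton_le_iff_mem]
    · rw [hfin, finrank_span_singleton hcne]
  have hA0 : ∀ x ∈ N.grading 0, ∃ α : ℂ, x = α • c := by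
    intro x hx
    obtain ⟨α, hα⟩ := Submodule.mem_span_singleton.mp (hspan ▸ hx)
    exact ⟨α, hα.symm⟩
  -- (w∘u)∘u = 0 for odd w, u
  have sq0 : ∀ w : V, ∀ u ∈ N.grading 1, N.mul (N.mul w u) u = 0 := by
    intro w u hu
    have h := N.super_right_comm 1 1 u hu u hu w
    rw [hsgn, neg_one_smul] at h
    have h3 : (2 : ℂ) • N.mul (N.mul w u) u = 0 := by
      rw [two_smul]; exact eq_neg_iff_add_eq_zero.mp h
    rcases smul_eq_zero.mp h3 with h | h
    · norm_num at h
    · exact h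
  -- A₀ ∘ A₁ = 0
  have hcL : ∀ u ∈ N.grading 1, N.mul c u = 0 := by
    intro u hu
    by_contra hne'
    have hwu0 : ∀ w ∈ N.grading 1, N.mul w u = 0 := by
      intro w hw
      obtain ⟨α, hα⟩ := hA0 _ (mulmem11 w hw u hu)
      have h0 := sq0 w u hu
      rw [hα, map_smul, LinearMap.smul_apply] at h0
      rcases smul_eq_zero.mp h0 with h | h
      · rw [hα, h, zero_smul]
      · exact absurd h hne'
    have h := N.super_right_comm 1 1 v₀ hv₀ u hu u₀
    rw [hsgn, neg_one_smul, hwu0 u₀ hu₀] at h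
    simp only [map_zero, LinearMap.zero_apply, neg_zero] at h
    exact hne' h
  have key01 : ∀ x ∈ N.grading 0, ∀ y ∈ N.grading 1, N.mul x y = 0 := by
    intro x hx y hy
    obtain ⟨α, rfl⟩ := hA0 x hx
    rw [map_smul, LinearMap.smul_apply, hcL y hy, smul_zero]
  -- u∘(v∘w) = -v∘(u∘w) for odd u,v,w
  have E' : ∀ u ∈ N.grading 1, ∀ v ∈ N.grading 1, ∀ w ∈ N.grading 1,
      N.mul u (N.mul v w) = - N.mul v (N.mul u w) := by
    intro u hu v hv w hw
    have h := N.super_left_sym 1 1 u hu v hv w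
    rw [hsgn, neg_one_smul, key01 _ (mulmem11 u hu v hv) w hw,
      key01 _ (mulmem11 v hv u hu) w hw] at h
    rw [zero_sub, zero_sub, neg_neg] at h
    exact neg_eq_iff_eq_neg.mp h
  -- A₁ ∘ A₀ = 0
  have hcR : ∀ u ∈ N.grading 1, N.mul u c = 0 := by
    intro u hu
    by_contra hne'
    have huw0 : ∀ w ∈ N.grading 1, N.mul u w = 0 := by
      intro w hw
      obtain ⟨α, hα⟩ := hA0 _ (mulmem11 u hu w hw)
      have h0 := E' u hu u hu w hw
      have h2 : (2 : ℂ) • N.mul u (N.mul u w) = 0 := by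
        rw [two_smul]; exact eq_neg_iff_add_eq_zero.mp h0
      have h3 : N.mul u (N.mul u w) = 0 := by
        rcases smul_eq_zero.mp h2 with h | h
        · norm_num at h
        · exact h
      rw [hα, map_smul] at h3
      rcases smul_eq_zero.mp h3 with h | h
      · rw [hα, h, zero_smul]
      · exact absurd h hne'
    have h := E' u hu u₀ hu₀ v₀ hv₀
    rw [huw0 v₀ hv₀] at h
    simp only [map_zero, neg_zero] at h
    exact hne' h
  have key10 : ∀ x ∈ N.grading 1, ∀ y ∈ N.grading 0, N.mul x y = 0 := by
    intro x hx y hy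
    obtain ⟨α, rfl⟩ := hA0 y hy
    rw [map_smul, hcR x hx, smul_zero]
  -- A₀ ∘ A₀ = 0
  have hcc : N.mul c c = 0 := by
    have h := N.super_right_comm 1 0 v₀ hv₀ c hcmem u₀
    rw [hval1, hval0, mul_zero, pow_zero, one_smul, hcR u₀ hu₀] at h
    simpa using h
  have key00 : ∀ x ∈ N.grading 0, ∀ y ∈ N.grading 0, N.mul x y = 0 := by
    intro x hx y hy
    obtain ⟨α, rfl⟩ := hA0 x hx
    obtain ⟨β, rfl⟩ := hA0 y hy
    simp only [map_smul, LinearMap.smul_apply, hcc, smul_zero]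
  exact ⟨key00, key01, key10⟩
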